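/- arXiv:1007.2845 — 2 statements merged into one kernel-verified Lean document; each statement's English description precedes it below -/
import Mathlib

section
/- For a finitely generated group G with presentation ⟨X|R⟩ with |X| finite, the p-rank d_p(G) is at least the p-deficiency def_p(G;X,R). -/
/-- `ν_p(r)`: the largest `k` such that `r = w^(p^k)` for some `w` in the free group. -/
noncomputable def nuP {X : Type*} (p : ℕ) (r : FreeGroup X) : ℕ :=
  sSup {k : ℕ | ∃ w : FreeGroup X, w ^ p ^ k = r}

/-- The `p`-deficiency of the presentation `⟨X | R⟩`:
`def_p = |X| - Σ_{r ∈ R} p^{-ν_p(r)}`. -/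
noncomputable def pDef {X : Type*} [Fintype X] (p : ℕ) (R : Set (FreeGroup X)) : ℝ :=
  (Fintype.card X : ℝ) - ∑' r : R, ((p : ℝ) ^ (nuP p (r : FreeGroup X)))⁻¹

/-! Abelianize and reduce modulo `p`: `θ : F(X) → 𝔽_p^X`. A relator with `ν_p(r) ≥ 1` is a
`p`-th power, so `θ` kills it; every other relator contributes exactly `1` to
`Σ_r p^{-ν_p(r)}`. Hence the images of the relators span a subspace `W` of dimension at most
`|X| - def_p`, and `G` surjects onto `𝔽_p^X / W`, of dimension at least `def_p`. -/

open Function Module Submodule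

theorem Summable.finite_of_one_le {ι : Type*} {f : ι → ℝ} (hf : Summable f) {s : Set ι}
    (hs : ∀ i ∈ s, 1 ≤ f i) : s.Finite := by
  have hsmall : ∀ᶠ i in Filter.cofinite, f i < 1 :=
    hf.tendsto_cofinite_zero.eventually_lt_const one_pos
  exact (Filter.eventually_cofinite.mp hsmall).subset fun i hi => (hs i hi).not_gt

theorem Summable.ncard_le_tsum {ι : Type*} {f : ι → ℝ} (hf : Summable f) (hf0 : ∀ i, 0 ≤ f i)
    {s : Set ι} (hs : ∀ i ∈ s, 1 ≤ f i) : (s.ncard : ℝ) ≤ ∑' i, f i := by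
  have hfin := hf.finite_of_one_le hs
  calc (s.ncard : ℝ) = ∑ _i ∈ hfin.toFinset, (1 : ℝ) := by
        simp [Set.ncard_eq_toFinset_card s hfin]
    _ ≤ ∑ i ∈ hfin.toFinset, f i := Finset.sum_le_sum fun i hi => hs i (hfin.mem_toFinset.mp hi)
    _ ≤ ∑' i, f i := hf.sum_le_tsum _ fun i _ => hf0 i

theorem finrank_span_range_le_ncard_support {R M ι : Type*} [Ring R] [StrongRankCondition R]
    [AddCommGroup M] [Module R M] (v : ι → M) (hv : (support v).Finite) :
    finrank R (span R (Set.range v)) ≤ (support v).ncard := by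
  have : Fintype (support v) := hv.fintype
  have hspan : span R (Set.range v) = span R (Set.range fun i : support v => v i) := by
    refine le_antisymm (span_le.mpr ?_) (span_mono (R := R) ?_)
    · rintro _ ⟨i, rfl⟩
      by_cases hi : v i = 0
      · simp [hi]
      · exact subset_span ⟨⟨i, hi⟩, rfl⟩
    · rintro _ ⟨i, rfl⟩
      exact ⟨i, rfl⟩
  rw [hspan, Set.ncard_eq_toFinset_card', Set.toFinset_card]
  exact finrank_range_le_card _

theorem exists_linearMap_surjective_of_le_finrank {K V : Type*} [DivisionRing K]
    [AddCommGroup V] [Module K V] [FiniteDimensional K V] {n : ℕ} (hn : n ≤ finrank K V) :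
    ∃ L : V →ₗ[K] (Fin n → K), Surjective L :=
  ⟨LinearMap.funLeft K K (Fin.castLE hn) ∘ₗ (finBasis K V).equivFun,
    (LinearMap.funLeft_surjective_of_injective K K _ (Fin.castLE_injective hn)).comp
      (finBasis K V).equivFun.surjective⟩

theorem Submodule.exists_surjective_linearMap_le_ker {K V : Type*} [DivisionRing K]
    [AddCommGroup V] [Module K V] [FiniteDimensional K V] {W : Submodule K V} {n : ℕ}
    (hn : n + finrank K W ≤ finrank K V) :
    ∃ L : V →ₗ[K] (Fin n → K), Surjective L ∧ W ≤ LinearMap.ker L := by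
  have hquot : n ≤ finrank K (V ⧸ W) := by
    have := W.finrank_quotient_add_finrank
    omega
  obtain ⟨L, hL⟩ := exists_linearMap_surjective_of_le_finrank hquot
  refine ⟨L ∘ₗ W.mkQ, hL.comp W.mkQ_surjective, fun w hw => ?_⟩
  simp [(Submodule.Quotient.mk_eq_zero W).mpr hw]

theorem PresentedGroup.exists_surjective_of_surjective {X H : Type*} [Group H]
    {R : Set (FreeGroup X)} (φ : FreeGroup X →* H) (hφ : Surjective φ) (hR : ∀ r ∈ R, φ r = 1) :
    ∃ f : PresentedGroup R →* H, Surjective f :=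
  ⟨QuotientGroup.lift _ φ (Subgroup.normalClosure_le_normal hR),
    QuotientGroup.lift_surjective_of_surjective _ φ hφ _⟩

theorem nuP_eq_zero_of_forall_pow_ne {X : Type*} {p : ℕ} {r : FreeGroup X}
    (hr : ∀ w : FreeGroup X, w ^ p ≠ r) : nuP p r = 0 := by
  refine Nat.eq_zero_of_le_zero (csSup_le' fun k ⟨w, hw⟩ => ?_)
  obtain _ | k := k
  · rfl
  · exact absurd (by rw [← hw, pow_succ, pow_mul]) (hr (w ^ p ^ k))

namespace FreeGroup

variable (X : Type*) [DecidableEq X] (p : ℕ)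

def modPAbelianization : FreeGroup X →* Multiplicative (X → ZMod p) :=
  FreeGroup.lift fun x => .ofAdd (Pi.single x 1)

variable {X p}

theorem modPAbelianization_surjective [Fintype X] :
    Surjective (modPAbelianization X p) := by
  rw [← MonoidHom.range_eq_top, eq_top_iff]
  rintro v -
  rw [← ofAdd_toAdd v, ← Finset.univ_sum_single v.toAdd, ofAdd_sum]
  refine Subgroup.prod_mem _ fun x _ => ⟨of x ^ ((v.toAdd x).cast : ℤ), ?_⟩
  simp [modPAbelianization, ← ofAdd_zsmul, ← Pi.single_smul']

theorem modPAbelianization_pow_self (w : FreeGroup X) :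
    modPAbelianization X p (w ^ p) = 1 := by
  rw [map_pow, ← ofAdd_toAdd (modPAbelianization X p w), ← ofAdd_nsmul]
  ext
  simp

theorem nuP_eq_zero_of_modPAbelianization_ne_one {r : FreeGroup X}
    (hr : modPAbelianization X p r ≠ 1) : nuP p r = 0 :=
  nuP_eq_zero_of_forall_pow_ne fun w hw => hr (hw ▸ modPAbelianization_pow_self (p := p) w)

end FreeGroup

/-- The `p`-rank `d_p(G)` is at least the `p`-deficiency `def_p(G; X, R)`: for every
natural number `n ≤ def_p(G;X,R)`, `G` surjects onto `(C_p)^n`. -/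
theorem pRank_ge_pDef {X : Type} [Fintype X] (p : ℕ) (hp : p.Prime)
    (R : Set (FreeGroup X))
    (hsum : Summable fun r : R => ((p : ℝ) ^ (nuP p (r : FreeGroup X)))⁻¹)
    (n : ℕ) (hn : (n : ℝ) ≤ pDef p R) :
    ∃ f : PresentedGroup R →* (Fin n → Multiplicative (ZMod p)),
      Function.Surjective f := by
  classical
  have : Fact p.Prime := ⟨hp⟩
  set θ := FreeGroup.modPAbelianization X p
  set v : R → X → ZMod p := fun r => (θ r).toAdd
  have hsupport : ∀ r ∈ support v, 1 ≤ ((p : ℝ) ^ nuP p (r : FreeGroup X))⁻¹ := fun r hr => by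
    rw [FreeGroup.nuP_eq_zero_of_modPAbelianization_ne_one (toAdd_eq_zero.not.mp hr),
      pow_zero, inv_one]
  have hW : n + finrank (ZMod p) (span (ZMod p) (Set.range v)) ≤
      finrank (ZMod p) (X → ZMod p) := by
    have hrank := finrank_span_range_le_ncard_support (R := ZMod p) v
      (hsum.finite_of_one_le hsupport)
    have hcard : (n : ℝ) + (support v).ncard ≤ Fintype.card X := by
      rw [pDef] at hn
      linarith [hsum.ncard_le_tsum (fun _ => by positivity) hsupport]
    rw [Module.finrank_fintype_fun_eq_card]
    have : n + (support v).ncard ≤ Fintype.card X := by exact_mod_cast hcard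
    omega
  obtain ⟨L, hL, hWL⟩ := Submodule.exists_surjective_linearMap_le_ker hW
  have hL' : Surjective L.toAddMonoidHom.toMultiplicative := hL
  refine PresentedGroup.exists_surjective_of_surjective
    ((MulEquiv.piMultiplicative _).toMonoidHom.comp (L.toAddMonoidHom.toMultiplicative.comp θ))
    ((MulEquiv.piMultiplicative fun _ : Fin n => ZMod p).surjective.comp
      (hL'.comp FreeGroup.modPAbelianization_surjective)) fun r hr => ?_
  have : L (v ⟨r, hr⟩) = 0 := hWL (subset_span ⟨⟨r, hr⟩, rfl⟩)
  simpa [v] using this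
end

section
/- If N is a subnormal subgroup of G of index p^k and N is p-large, then G is p-large. -/
/-- A group `G` is `p`-large if some normal subgroup of index a power of `p`
surjects onto a non-abelian free group (equivalently, onto `F₂`). -/
def IsPLarge (p : ℕ) (G : Type*) [Group G] : Prop :=
  ∃ N : Subgroup G, N.Normal ∧ (∃ k : ℕ, N.index = p ^ k) ∧
    ∃ f : N →* FreeGroup (Fin 2), Function.Surjective f

/-- `H` is normal in `K` (both viewed as subgroups of an ambient group):
`H ≤ K` and `K` normalises `H`. -/
def NormalIn {G : Type*} [Group G] (H K : Subgroup G) : Prop :=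
  H ≤ K ∧ ∀ k ∈ K, ∀ h ∈ H, k * h * k⁻¹ ∈ H

/-- `H` is subnormal in `G`: there is a chain `H = H_n ⊴ H_{n-1} ⊴ ⋯ ⊴ H_0 = G`. -/
def Subnormal {G : Type*} [Group G] (H : Subgroup G) : Prop :=
  Relation.ReflTransGen NormalIn H ⊤

/-! If `H` is subnormal in `G`, the relative indices along a subnormal chain multiply to
`|G : H|`, so `g ^ |G : H| ∈ H` for every `g : G`. This is invariant under conjugation, so
`g ^ |G : H|` even lies in the normal core of `H`; when `|G : H| = p ^ k` the quotient by the
core is therefore a finite `p`-group.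

Apply this to a normal subgroup `A` of `p`-power index in `N` that surjects onto `F₂`: `A` is
subnormal of `p`-power index in `G`, so its core `L` is normal of `p`-power index in `G`. As `L`
has finite index in `A`, its image in `F₂` has finite index; that image is free
(Nielsen–Schreier) and not abelian, hence surjects onto `F₂`. -/

open Subgroup

lemma Subnormal.isSubnormal {G : Type*} [Group G] {H : Subgroup G} (h : Subnormal H) :
    H.IsSubnormal := by
  induction h using Relation.ReflTransGen.head_induction_on with
  | refl => exact .top
  | head hHK _ ih => exact .step _ _ hHK.1 ih ⟨fun n hn k => hHK.2 k k.2 n hn⟩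

namespace Subgroup.IsSubnormal

variable {G : Type*} [Group G] {H : Subgroup G}

lemma pow_index_mem (hH : H.IsSubnormal) (g : G) : g ^ H.index ∈ H := by
  induction hH with
  | top => exact mem_top _
  | step H K hHK _ _ ih =>
    rw [← relIndex_mul_index hHK, mul_comm, pow_mul]
    exact (H.subgroupOf K).pow_index_mem ⟨_, ih⟩

lemma pow_index_mem_normalCore (hH : H.IsSubnormal) (g : G) : g ^ H.index ∈ H.normalCore :=
  fun b => conj_pow (a := b) ▸ hH.pow_index_mem _

lemma exists_index_normalCore_eq_pow {p k : ℕ} [Fact p.Prime] (hH : H.IsSubnormal)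
    (hidx : H.index = p ^ k) : ∃ m, H.normalCore.index = p ^ m := by
  have : H.FiniteIndex := ⟨hidx ▸ pow_ne_zero k (Fact.out : p.Prime).ne_zero⟩
  have hpG : IsPGroup p (G ⧸ H.normalCore) := by
    rintro ⟨g⟩
    exact ⟨k, (QuotientGroup.eq_one_iff _).2 (hidx ▸ hH.pow_index_mem_normalCore g)⟩
  exact IsPGroup.iff_card.1 hpG

end Subgroup.IsSubnormal

namespace FreeGroup

variable {α : Type*}

lemma isReduced_of_forall_snd_eq_true {L : List (α × Bool)} (h : ∀ x ∈ L, x.2 = true) :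
    IsReduced L :=
  .of_forall_not_step fun _ hstep => by
    rcases hstep with @⟨L₁, L₂, x, b⟩
    simpa using (h (x, b) (by simp)).trans (h (x, !b) (by simp)).symm

lemma toWord_of_pow_mul_of_pow [DecidableEq α] (a b : α) (m n : ℕ) :
    toWord (of a ^ m * of b ^ n) = List.replicate m (a, true) ++ List.replicate n (b, true) := by
  rw [toWord_mul, toWord_of_pow, toWord_of_pow]
  exact (isReduced_of_forall_snd_eq_true (by simp +contextual)).reduce_eq

lemma not_commute_of_pow_of_pow {a b : α} (hab : a ≠ b) {m n : ℕ} (hm : m ≠ 0) (hn : n ≠ 0) :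
    ¬Commute (of a ^ m) (of b ^ n) := by
  classical
  intro h
  have := congrArg toWord h.eq
  rw [toWord_of_pow_mul_of_pow, toWord_of_pow_mul_of_pow] at this
  obtain ⟨m, rfl⟩ := Nat.exists_eq_succ_of_ne_zero hm
  obtain ⟨n, rfl⟩ := Nat.exists_eq_succ_of_ne_zero hn
  simp only [List.replicate_succ, List.cons_append, List.cons.injEq, Prod.mk.injEq] at this
  exact hab this.1.1

lemma commute_of_subsingleton [Subsingleton α] (x y : FreeGroup α) : Commute x y := by
  cases isEmpty_or_nonempty α
  · obtain rfl := Subsingleton.elim x y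
    exact Commute.refl x
  · have : Unique α := uniqueOfSubsingleton (Classical.arbitrary α)
    exact IsCyclic.commGroup.mul_comm x y

end FreeGroup

lemma IsFreeGroup.exists_surjective_freeGroup_fin_two {H : Type*} [Group H] [IsFreeGroup H]
    {u v : H} (huv : ¬Commute u v) : ∃ f : H →* FreeGroup (Fin 2), Function.Surjective f := by
  classical
  obtain ⟨a, b, hab⟩ : ∃ a b : Generators H, a ≠ b := by
    by_contra! h
    have : Subsingleton (Generators H) := ⟨h⟩
    have := (FreeGroup.commute_of_subsingleton (toFreeGroup H u) (toFreeGroup H v)).map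
      (toFreeGroup H).symm
    exact huv (by simpa using this)
  let r : Generators H → Fin 2 := fun x => if x = a then 0 else 1
  have hr : Function.Surjective r := by
    intro i
    fin_cases i
    · exact ⟨a, if_pos rfl⟩
    · exact ⟨b, if_neg hab.symm⟩
  exact ⟨(FreeGroup.map r).comp (toFreeGroup H).toMonoidHom,
    (FreeGroup.map_surjective hr).comp (toFreeGroup H).surjective⟩

lemma FreeGroup.exists_surjective_of_index_ne_zero {α : Type*} {a b : α} (hab : a ≠ b)
    {H : Subgroup (FreeGroup α)} (hH : H.index ≠ 0) :
    ∃ f : H →* FreeGroup (Fin 2), Function.Surjective f := by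
  obtain ⟨m, hm, -, ham⟩ := exists_pow_mem_of_index_ne_zero hH (of a)
  obtain ⟨n, hn, -, hbn⟩ := exists_pow_mem_of_index_ne_zero hH (of b)
  refine IsFreeGroup.exists_surjective_freeGroup_fin_two (u := ⟨_, ham⟩) (v := ⟨_, hbn⟩) ?_
  exact fun h => not_commute_of_pow_of_pow hab hm.ne' hn.ne' (congrArg Subtype.val h)

lemma Subgroup.exists_surjective_freeGroup_of_le {G : Type*} [Group G] {H K : Subgroup G}
    (hKH : K ≤ H) (hK : K.relIndex H ≠ 0) {f : H →* FreeGroup (Fin 2)}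
    (hf : Function.Surjective f) : ∃ g : K →* FreeGroup (Fin 2), Function.Surjective g := by
  obtain ⟨s, hs⟩ := FreeGroup.exists_surjective_of_index_ne_zero (a := (0 : Fin 2)) (b := 1)
    (by decide) (H := (K.subgroupOf H).map f)
    fun h => hK (Nat.eq_zero_of_zero_dvd (h ▸ index_map_dvd _ hf))
  exact ⟨s.comp ((f.subgroupMap _).comp (subgroupOfEquivOfLe hKH).symm.toMonoidHom),
    hs.comp ((f.subgroupMap_surjective _).comp (MulEquiv.surjective _))⟩

/-- If `N` is a subnormal subgroup of `G` of index `p^k` and `N` is `p`-large,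
then `G` is `p`-large. -/
theorem pLarge_of_subnormal {G : Type*} [Group G] (p k : ℕ) (hp : p.Prime)
    (N : Subgroup G) (hsn : Subnormal N) (hidx : N.index = p ^ k)
    (hN : IsPLarge p N) :
    IsPLarge p G := by
  have : Fact p.Prime := ⟨hp⟩
  obtain ⟨A, hA, ⟨j, hAidx⟩, f, hf⟩ := hN
  set A' := A.map N.subtype
  have hA'sn : A'.IsSubnormal := .step _ N (map_subtype_le A) hsn.isSubnormal (by
    rwa [← comap_subtype, comap_map_eq_self_of_injective N.subtype_injective])
  have hA'idx : A'.index = p ^ (j + k) := by rw [index_map_subtype, hAidx, hidx, pow_add]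
  obtain ⟨m, hm⟩ := hA'sn.exists_index_normalCore_eq_pow hA'idx
  have hcore : A'.normalCore.relIndex A' ≠ 0 :=
    ne_zero_of_dvd_ne_zero (hm ▸ pow_ne_zero m hp.ne_zero) (relIndex_dvd_index_of_normal _ _)
  let e : A ≃* A' := A.equivMapOfInjective _ N.subtype_injective
  exact ⟨A'.normalCore, inferInstance, ⟨m, hm⟩, exists_surjective_freeGroup_of_le
    (normalCore_le A') hcore (f := f.comp e.symm.toMonoidHom) (hf.comp e.symm.surjective)⟩
end
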